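/- arXiv:1901.09070 — 2 statements merged into one kernel-verified Lean document; each statement's English description precedes it below -/
import Mathlib

section
/- The stabilizer norm is multiplicative under tensor (Kronecker) products: for an n-qubit complex matrix A and an m-qubit complex matrix B, D(A ⊗ B) = D(A) · D(B), where A ⊗ B is viewed as an (n+m)-qubit matrix. -/
open Matrix BigOperators Kronecker

noncomputable section

/-- The four single-qubit Pauli matrices `I, X, Y, Z`. -/
def pauli1 : Fin 4 → Matrix (Fin 2) (Fin 2) ℂ :=
  ![(1 : Matrix (Fin 2) (Fin 2) ℂ),
    !![0, 1; 1, 0],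
    !![0, -Complex.I; Complex.I, 0],
    !![1, 0; 0, -1]]

/-- The `n`-qubit Pauli matrix `σ_{s 0} ⊗ ⋯ ⊗ σ_{s (n-1)}`, as a matrix on `Fin n → Fin 2`. -/
def nPauli (n : ℕ) (s : Fin n → Fin 4) :
    Matrix (Fin n → Fin 2) (Fin n → Fin 2) ℂ :=
  Matrix.of fun x y => ∏ k : Fin n, pauli1 (s k) (x k) (y k)

/-- The stabilizer norm `D(A) = 2^{-n} Σ_{σ ∈ P_n} |Tr(σ A)|`. -/
def stabNorm {n : ℕ} (A : Matrix (Fin n → Fin 2) (Fin n → Fin 2) ℂ) : ℝ :=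
  ((2 : ℝ) ^ n)⁻¹ * ∑ s : Fin n → Fin 4, ‖(nPauli n s * A).trace‖

/-- The Kronecker (tensor) product of an `n`-qubit matrix and an `m`-qubit matrix,
viewed as an `(n+m)`-qubit matrix. -/
def qKron {n m : ℕ} (A : Matrix (Fin n → Fin 2) (Fin n → Fin 2) ℂ)
    (B : Matrix (Fin m → Fin 2) (Fin m → Fin 2) ℂ) :
    Matrix (Fin (n + m) → Fin 2) (Fin (n + m) → Fin 2) ℂ :=
  Matrix.of fun x y =>
    A (fun i => x (Fin.castAdd m i)) (fun i => y (Fin.castAdd m i)) *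
    B (fun j => x (Fin.natAdd n j)) (fun j => y (Fin.natAdd n j))

/-! Splitting an `(n+m)`-qubit basis index into its first `n` and last `m` qubits
(`Fin.appendEquiv`) turns both `qKron A B` and the Pauli string of `Fin.append s t` into
Kronecker products, so `Tr(σ_{s,t} (A ⊗ B)) = Tr(σ_s A) · Tr(σ_t B)`; summing the absolute
values over all pairs `(s, t)` factorizes the stabilizer norm. -/

theorem Matrix.trace_reindex {ι κ R : Type*} [Fintype ι] [Fintype κ] [AddCommMonoid R]
    (e : ι ≃ κ) (M : Matrix ι ι R) : (reindex e e M).trace = M.trace :=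
  Fintype.sum_equiv e.symm _ _ fun _ => rfl

section

variable {n m : ℕ}

theorem qKron_eq_reindex_kronecker (A : Matrix (Fin n → Fin 2) (Fin n → Fin 2) ℂ)
    (B : Matrix (Fin m → Fin 2) (Fin m → Fin 2) ℂ) :
    qKron A B = reindex (Fin.appendEquiv n m) (Fin.appendEquiv n m) (A ⊗ₖ B) :=
  rfl

theorem nPauli_append (s : Fin n → Fin 4) (t : Fin m → Fin 4) :
    nPauli (n + m) (Fin.append s t) =
      reindex (Fin.appendEquiv n m) (Fin.appendEquiv n m) (nPauli n s ⊗ₖ nPauli m t) := by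
  ext x y
  simp [nPauli, Fin.prod_univ_add]

theorem trace_nPauli_append_mul_qKron (s : Fin n → Fin 4) (t : Fin m → Fin 4)
    (A : Matrix (Fin n → Fin 2) (Fin n → Fin 2) ℂ)
    (B : Matrix (Fin m → Fin 2) (Fin m → Fin 2) ℂ) :
    (nPauli (n + m) (Fin.append s t) * qKron A B).trace =
      (nPauli n s * A).trace * (nPauli m t * B).trace := by
  rw [nPauli_append, qKron_eq_reindex_kronecker, reindex_apply, reindex_apply,
    submatrix_mul_equiv, ← mul_kronecker_mul, ← reindex_apply, trace_reindex, trace_kronecker]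

theorem sum_norm_trace_nPauli_mul_qKron (A : Matrix (Fin n → Fin 2) (Fin n → Fin 2) ℂ)
    (B : Matrix (Fin m → Fin 2) (Fin m → Fin 2) ℂ) :
    ∑ s, ‖(nPauli (n + m) s * qKron A B).trace‖ =
      (∑ s, ‖(nPauli n s * A).trace‖) * ∑ t, ‖(nPauli m t * B).trace‖ := by
  rw [← (Fin.appendEquiv n m).sum_comp, Fintype.sum_prod_type, Finset.sum_mul_sum]
  refine Fintype.sum_congr _ _ fun s => Fintype.sum_congr _ _ fun t => ?_
  rw [← norm_mul, ← trace_nPauli_append_mul_qKron]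
  rfl

end

theorem stabNorm_kron_general (n m : ℕ)
    (A : Matrix (Fin n → Fin 2) (Fin n → Fin 2) ℂ)
    (B : Matrix (Fin m → Fin 2) (Fin m → Fin 2) ℂ) :
    stabNorm (qKron A B) = stabNorm A * stabNorm B := by
  rw [stabNorm, stabNorm, stabNorm, sum_norm_trace_nPauli_mul_qKron, pow_add, mul_inv]
  ring

/-- The stabilizer norm is multiplicative under tensor products:
`D(A ⊗ B) = D(A) · D(B)`. -/
theorem stabNorm_kron (n m : ℕ) (hn : 1 ≤ n) (hm : 1 ≤ m)
    (A : Matrix (Fin n → Fin 2) (Fin n → Fin 2) ℂ)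
    (B : Matrix (Fin m → Fin 2) (Fin m → Fin 2) ℂ) :
    stabNorm (qKron A B) = stabNorm A * stabNorm B :=
  stabNorm_kron_general n m A B
end
end

section
/- Let ρ_H = (I + (X + Z)/√2)/2 be the single-qubit Hadamard-eigenstate density matrix. Then D(ρ_H) = (1 + √2)/2 > 1 (so ρ_H is not hyper-octahedral), while D(ρ_H ⊗ I/2) = (1 + √2)/4 ≤ 1 (so the two-qubit state ρ_H ⊗ I/2 is hyper-octahedral). -/
open Matrix BigOperators Kronecker

noncomputable section

/-- The single-qubit Hadamard-eigenstate density matrix `ρ_H = (I + (X + Z)/√2)/2`,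
as a 1-qubit matrix. -/
def rhoH : Matrix (Fin 1 → Fin 2) (Fin 1 → Fin 2) ℂ :=
  (2 : ℂ)⁻¹ • ((1 : Matrix (Fin 1 → Fin 2) (Fin 1 → Fin 2) ℂ) +
    ((Real.sqrt 2 : ℝ) : ℂ)⁻¹ • (nPauli 1 ![1] + nPauli 1 ![3]))

/-!
The Pauli strings are orthogonal for the trace form, `Tr(σ_s σ_t) = 2^n δ_{st}`, so the stabilizer
norm of `Σ_t c_t σ_t` is `Σ_t |c_t|`. In this basis `ρ_H` has coefficients `1/2, 1/(2√2), 0, 1/(2√2)`,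
whence `D(ρ_H) = (1 + √2)/2`. A Pauli string on `n + m` qubits is the tensor product of one on `n`
and one on `m` qubits, and the trace is multiplicative under tensor products, so `D` is multiplicative
under `⊗`; with `D(I/2) = 1/2` this gives `D(ρ_H ⊗ I/2) = (1 + √2)/4`.
-/

section Kronecker

variable {n m : ℕ}

lemma qKron_eq_submatrix_kronecker (A : Matrix (Fin n → Fin 2) (Fin n → Fin 2) ℂ)
    (B : Matrix (Fin m → Fin 2) (Fin m → Fin 2) ℂ) :
    qKron A B = (A ⊗ₖ B).submatrix (Fin.appendEquiv n m).symm (Fin.appendEquiv n m).symm :=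
  rfl

lemma qKron_mul_qKron (A C : Matrix (Fin n → Fin 2) (Fin n → Fin 2) ℂ)
    (B D : Matrix (Fin m → Fin 2) (Fin m → Fin 2) ℂ) :
    qKron A B * qKron C D = qKron (A * C) (B * D) := by
  simp only [qKron_eq_submatrix_kronecker, submatrix_mul_equiv, mul_kronecker_mul]

lemma trace_qKron (A : Matrix (Fin n → Fin 2) (Fin n → Fin 2) ℂ)
    (B : Matrix (Fin m → Fin 2) (Fin m → Fin 2) ℂ) :
    (qKron A B).trace = A.trace * B.trace := by
  rw [← trace_kronecker, qKron_eq_submatrix_kronecker]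
  exact (Fin.appendEquiv n m).symm.sum_comp fun p => (A ⊗ₖ B) p p

lemma nPauli_add (s : Fin (n + m) → Fin 4) :
    nPauli (n + m) s =
      qKron (nPauli n fun i => s (Fin.castAdd m i)) (nPauli m fun j => s (Fin.natAdd n j)) := by
  ext x y
  exact Fin.prod_univ_add _

lemma stabNorm_qKron (A : Matrix (Fin n → Fin 2) (Fin n → Fin 2) ℂ)
    (B : Matrix (Fin m → Fin 2) (Fin m → Fin 2) ℂ) :
    stabNorm (qKron A B) = stabNorm A * stabNorm B := by
  have hsum : ∑ s : Fin (n + m) → Fin 4, ‖(nPauli (n + m) s * qKron A B).trace‖ =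
      (∑ s, ‖(nPauli n s * A).trace‖) * ∑ t, ‖(nPauli m t * B).trace‖ := by
    rw [Finset.sum_mul_sum, ← Fintype.sum_prod_type', ← (Fin.appendEquiv n m).symm.sum_comp]
    simp only [nPauli_add, qKron_mul_qKron, trace_qKron, norm_mul, Fin.appendEquiv_symm_apply]
  rw [stabNorm, stabNorm, stabNorm, hsum, pow_add, mul_inv]
  ring

end Kronecker

section PauliBasis

variable {n : ℕ}

lemma trace_pauli1_mul_pauli1 (a b : Fin 4) :
    (pauli1 a * pauli1 b).trace = if a = b then 2 else 0 := by
  fin_cases a <;> fin_cases b <;> norm_num [pauli1, trace_fin_two]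

lemma trace_nPauli_mul (s t : Fin n → Fin 4) :
    (nPauli n s * nPauli n t).trace = ∏ k, (pauli1 (s k) * pauli1 (t k)).trace := by
  simp only [trace, diag, mul_apply, nPauli, of_apply, ← Finset.prod_mul_distrib,
    Fintype.prod_sum]

lemma trace_nPauli_mul_nPauli (s t : Fin n → Fin 4) :
    (nPauli n s * nPauli n t).trace = if s = t then 2 ^ n else 0 := by
  simp only [trace_nPauli_mul, trace_pauli1_mul_pauli1, Fintype.prod_ite_zero, funext_iff,
    Finset.prod_const, Finset.card_univ, Fintype.card_fin]

lemma trace_nPauli_mul_sum_smul (c : (Fin n → Fin 4) → ℂ) (s : Fin n → Fin 4) :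
    (nPauli n s * ∑ t, c t • nPauli n t).trace = 2 ^ n * c s := by
  simp [Matrix.mul_sum, trace_sum, trace_nPauli_mul_nPauli, mul_comm]

lemma stabNorm_sum_smul_nPauli (c : (Fin n → Fin 4) → ℂ) :
    stabNorm (∑ t, c t • nPauli n t) = ∑ t, ‖c t‖ := by
  simp only [stabNorm, trace_nPauli_mul_sum_smul, norm_mul, norm_pow, Complex.norm_ofNat,
    ← Finset.mul_sum, ← mul_assoc]
  field_simp

lemma nPauli_zero : nPauli n 0 = 1 := by
  ext x y
  simp [nPauli, pauli1, one_apply, Fintype.prod_boole, funext_iff]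

lemma stabNorm_smul_one (c : ℂ) :
    stabNorm (c • (1 : Matrix (Fin n → Fin 2) (Fin n → Fin 2) ℂ)) = ‖c‖ := by
  have hc : c • (1 : Matrix (Fin n → Fin 2) (Fin n → Fin 2) ℂ) =
      ∑ t, (if t = 0 then c else 0) • nPauli n t := by
    simp only [ite_smul, zero_smul, Finset.sum_ite_eq', Finset.mem_univ, if_true, nPauli_zero]
  rw [hc, stabNorm_sum_smul_nPauli]
  simp only [apply_ite norm, norm_zero, Finset.sum_ite_eq', Finset.mem_univ, if_true]

lemma stabNorm_sum_smul_nPauli_one (c : Fin 4 → ℂ) :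
    stabNorm (∑ i, c i • nPauli 1 ![i]) = ∑ i, ‖c i‖ := by
  have hsum : ∑ i, c i • nPauli 1 ![i] = ∑ t : Fin 1 → Fin 4, c (t 0) • nPauli 1 t :=
    Fintype.sum_equiv (Equiv.funUnique (Fin 1) (Fin 4)).symm _ _ fun _ => rfl
  rw [hsum, stabNorm_sum_smul_nPauli]
  exact Fintype.sum_equiv (Equiv.funUnique (Fin 1) (Fin 4)) _ _ fun _ => rfl

end PauliBasis

lemma rhoH_eq_sum_smul_nPauli :
    rhoH = ∑ i, ![2⁻¹, (2 * (√2 : ℂ))⁻¹, 0, (2 * (√2 : ℂ))⁻¹] i • nPauli 1 ![i] := by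
  have hI : nPauli 1 ![0] = 1 := by rw [← zero_empty, cons_zero_zero, nPauli_zero]
  simp only [rhoH, Fin.sum_univ_four, hI, cons_val_zero, cons_val_one, cons_val_two,
    cons_val_three, head_cons, tail_cons]
  module

lemma stabNorm_rhoH : stabNorm rhoH = (1 + √2) / 2 := by
  rw [rhoH_eq_sum_smul_nPauli, stabNorm_sum_smul_nPauli_one, Fin.sum_univ_four]
  simp only [cons_val_zero, cons_val_one, cons_val_two, cons_val_three, head_cons, tail_cons,
    norm_inv, norm_mul, Complex.norm_ofNat, Complex.norm_real, Real.norm_eq_abs,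
    abs_of_nonneg (Real.sqrt_nonneg 2), norm_zero]
  field_simp
  linear_combination -Real.mul_self_sqrt zero_le_two

/-- `D(ρ_H) = (1+√2)/2 > 1` (so `ρ_H` is not hyper-octahedral), while
`D(ρ_H ⊗ I/2) = (1+√2)/4 ≤ 1` (so `ρ_H ⊗ I/2` is hyper-octahedral). -/
theorem rhoH_not_octahedral_but_tensor_is :
    stabNorm rhoH = (1 + Real.sqrt 2) / 2 ∧
    1 < stabNorm rhoH ∧
    stabNorm (qKron rhoH
      ((2 : ℂ)⁻¹ • (1 : Matrix (Fin 1 → Fin 2) (Fin 1 → Fin 2) ℂ))) =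
      (1 + Real.sqrt 2) / 4 ∧
    stabNorm (qKron rhoH
      ((2 : ℂ)⁻¹ • (1 : Matrix (Fin 1 → Fin 2) (Fin 1 → Fin 2) ℂ))) ≤ 1 := by
  have hTensor : stabNorm (qKron rhoH
      ((2 : ℂ)⁻¹ • (1 : Matrix (Fin 1 → Fin 2) (Fin 1 → Fin 2) ℂ))) = (1 + √2) / 4 := by
    rw [stabNorm_qKron, stabNorm_rhoH, stabNorm_smul_one, norm_inv, Complex.norm_ofNat]
    ring
  refine ⟨stabNorm_rhoH, ?_, hTensor, ?_⟩
  · rw [stabNorm_rhoH]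
    linarith [Real.one_lt_sqrt_two]
  · rw [hTensor]
    linarith [Real.sqrt_two_lt_three_halves]
end
end
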